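/- Let K be a field of characteristic zero, V a finite-dimensional K-vector space, and n a natural number with dim_K V ≥ n. Then the K-vector space of endomorphisms f of V^{⊗n} such that f ∘ g^{⊗n} = g^{⊗n} ∘ f for every invertible K-linear map g : V → V has dimension n!. -/

import Mathlib

open scoped TensorProduct

/-- The endomorphism `L_σ^{(n)}` of the `n`-th tensor power of `V`, determined by
`v_1 ⊗ ⋯ ⊗ v_n ↦ v_{σ⁻¹(1)} ⊗ ⋯ ⊗ v_{σ⁻¹(n)}`. -/
noncomputable def permMap (K : Type*) [Field K] (V : Type*) [AddCommGroup V] [Module K V]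
    (n : ℕ) (σ : Equiv.Perm (Fin n)) :
    (⨂[K] _ : Fin n, V) →ₗ[K] ⨂[K] _ : Fin n, V :=
  (PiTensorProduct.reindex K (fun _ : Fin n => V) σ).toLinearMap

/-- The endomorphism `T^{⊗n}` of the `n`-th tensor power of `V` induced by `T : V →ₗ[K] V`. -/
noncomputable def tpowMap (K : Type*) [Field K] (V : Type*) [AddCommGroup V] [Module K V]
    (n : ℕ) (T : V →ₗ[K] V) :
    (⨂[K] _ : Fin n, V) →ₗ[K] ⨂[K] _ : Fin n, V :=
  PiTensorProduct.map fun _ => T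

/-- The commutant of the diagonal `GL(V)`-action on `V^{⊗n}`: the space of endomorphisms
`f` of `V^{⊗n}` such that `f ∘ g^{⊗n} = g^{⊗n} ∘ f` for every invertible `g : V → V`. -/
noncomputable def glCommutant (K : Type*) [Field K] (V : Type*) [AddCommGroup V] [Module K V]
    (n : ℕ) : Submodule K (Module.End K (⨂[K] _ : Fin n, V)) where
  carrier := {f | ∀ g : V ≃ₗ[K] V,
    f ∘ₗ tpowMap K V n g.toLinearMap = tpowMap K V n g.toLinearMap ∘ₗ f}
  add_mem' := by
    intro a b ha hb g
    simp only [LinearMap.add_comp, LinearMap.comp_add, ha g, hb g]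
  zero_mem' := by
    intro g
    simp
  smul_mem' := by
    intro c a ha g
    simp only [LinearMap.smul_comp, LinearMap.comp_smul, ha g]

/-!
Fix a basis `b` of `V` and the pure tensor `e₀ = b₁ ⊗ ⋯ ⊗ bₙ` of `n` distinct basis vectors, which
exists because `n ≤ dim V`. Evaluation at `e₀` maps the commutant injectively onto the span of the
`n!` linearly independent tensors `b_{σ 1} ⊗ ⋯ ⊗ b_{σ n}`.

The image contains them since permuting tensor factors commutes with every `g^{⊗n}`. It lies in
their span since `f` commutes with the diagonal torus, so `f e₀` has the torus weight of `e₀`,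
and in characteristic zero a weight `t ↦ ∏ₖ t (J k)` determines the multiset of indices `J`.

For injectivity, if `f e₀ = 0` then `f` kills `g(b₁) ⊗ ⋯ ⊗ g(bₙ)` for every `g ∈ GL(V)`. Given
`w₁, …, wₙ`, take `g = 1 + c A_s` with `A_s bₖ = [k ∈ s] wₖ`; once `c ≠ 0` avoids the finitely many
values `-μ⁻¹` with `μ` in a spectrum, all these `g` are invertible, and inclusion–exclusion over `s`
gives `cⁿ f(w₁ ⊗ ⋯ ⊗ wₙ) = 0`.
-/

theorem MultilinearMap.map_eq_sum_neg_one_pow_smul_map_piecewise_add {R ι N : Type*}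
    {M : ι → Type*} [CommRing R] [∀ i, AddCommGroup (M i)] [∀ i, Module R (M i)]
    [AddCommGroup N] [Module R N] [DecidableEq ι] [Fintype ι]
    (F : MultilinearMap R M N) (m m' : ∀ i, M i) :
    F m = ∑ s : Finset ι, (-1 : R) ^ sᶜ.card • F (s.piecewise (m + m') m') := by
  calc F m = F ((m + m') + -m') := by rw [add_neg_cancel_right]
    _ = _ := by
      rw [F.map_add_univ]
      refine Finset.sum_congr rfl fun s _ => ?_
      have : s.piecewise (m + m') (-m') =
          sᶜ.piecewise (fun i => (-1 : R) • s.piecewise (m + m') m' i)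
            (s.piecewise (m + m') m') := by
        ext i
        by_cases hi : i ∈ s <;> simp [hi]
      rw [this, F.map_piecewise_smul, Finset.prod_const]

theorem Module.End.exists_ne_zero_forall_isUnit_one_add_smul {K V ι : Type*} [Field K]
    [Infinite K] [AddCommGroup V] [Module K V] [FiniteDimensional K V] [Finite ι]
    (A : ι → Module.End K V) : ∃ c : K, c ≠ 0 ∧ ∀ i, IsUnit (1 + c • A i) := by
  set S : Set K := insert 0 (⋃ i, (fun μ => -μ⁻¹) '' spectrum K (A i))
  have hbad : ∀ i, {c : K | ¬IsUnit (1 + c • A i)} ⊆ S := by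
    intro i c hc
    by_cases hc0 : c = 0
    · exact Or.inl hc0
    refine Or.inr (Set.mem_iUnion.mpr ⟨i, -c⁻¹, spectrum.mem_iff.mpr fun hu => hc ?_, by simp⟩)
    have : 1 + c • A i = algebraMap K _ (-c) * (algebraMap K _ (-c⁻¹) - A i) := by
      rw [mul_sub, ← map_mul, neg_mul_neg, mul_inv_cancel₀ hc0, map_one,
        Algebra.algebraMap_eq_smul_one, smul_mul_assoc, one_mul, neg_smul, sub_neg_eq_add]
    rw [this]
    exact ((neg_ne_zero.mpr hc0).isUnit.map _).mul hu
  obtain ⟨c, hc⟩ : Sᶜ.Nonempty :=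
    ((Set.finite_iUnion fun i => (A i).finite_spectrum.image _).insert 0).infinite_compl.nonempty
  exact ⟨c, fun h => hc (Or.inl h), fun i => not_not.mp fun h => hc (hbad i h)⟩

theorem exists_perm_eq_comp_of_forall_prod_eq {K ι κ : Type*} [Field K] [CharZero K] [Fintype ι]
    [DecidableEq κ] {J J' : ι → κ}
    (h : ∀ t : κ → Kˣ, ∏ i, (t (J i) : K) = ∏ i, (t (J' i) : K)) :
    ∃ σ : Equiv.Perm ι, J = J' ∘ σ := by
  have hcard : ∀ c, Fintype.card {i // J i = c} = Fintype.card {i // J' i = c} := by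
    intro c
    have h2 := h fun j => if j = c then Units.mk0 2 two_ne_zero else 1
    simp only [apply_ite Units.val, Units.val_mk0, Units.val_one, Finset.prod_ite,
      Finset.prod_const, one_pow, mul_one] at h2
    rw [Fintype.card_subtype, Fintype.card_subtype]
    exact Nat.pow_right_injective le_rfl (by exact_mod_cast h2)
  exact ⟨Equiv.ofFiberEquiv fun c => Fintype.equivOfCardEq (hcard c),
    funext fun i => (Equiv.ofFiberEquiv_map _ i).symm⟩

open Function PiTensorProduct

section TensorPower

variable {K : Type*} [Field K] {V : Type*} [AddCommGroup V] [Module K V] {n : ℕ}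

theorem permMap_tprod (σ : Equiv.Perm (Fin n)) (v : Fin n → V) :
    permMap K V n σ (tprod K v) = tprod K (v ∘ σ.symm) :=
  reindex_tprod σ v

theorem permMap_mem_glCommutant (σ : Equiv.Perm (Fin n)) : permMap K V n σ ∈ glCommutant K V n :=
  fun g => (map_comp_reindex_eq (fun _ => g.toLinearMap) σ).symm

theorem tpowMap_tprod (T : V →ₗ[K] V) (v : Fin n → V) :
    tpowMap K V n T (tprod K v) = tprod K (T ∘ v) :=
  map_tprod _ v

theorem eq_zero_of_mem_glCommutant_of_apply_tprod_eq_zero [Infinite K] [FiniteDimensional K V]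
    {κ : Type*} (b : Module.Basis κ K V) {e : Fin n → κ} (he : Injective e)
    {f : Module.End K (⨂[K] _ : Fin n, V)} (hf : f ∈ glCommutant K V n)
    (h0 : f (tprod K (b ∘ e)) = 0) : f = 0 := by
  classical
  refine PiTensorProduct.ext (MultilinearMap.ext fun w => ?_)
  obtain ⟨c, hc0, hc⟩ := Module.End.exists_ne_zero_forall_isUnit_one_add_smul
    fun s : Finset (Fin n) => ∑ k ∈ s, (b.coord (e k)).smulRight (w k)
  have hvanish : ∀ s : Finset (Fin n), f (tprod K (s.piecewise (c • w + b ∘ e) (b ∘ e))) = 0 := by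
    intro s
    let g := LinearEquiv.ofBijective _ ((Module.End.isUnit_iff _).mp (hc s))
    have hg : g ∘ (b ∘ e) = s.piecewise (c • w + b ∘ e) (b ∘ e) := by
      ext k
      by_cases hk : k ∈ s <;>
        simp [g, hk, Finsupp.single_apply, he.eq_iff, add_comm]
    rw [← hg, ← LinearEquiv.coe_toLinearMap, ← tpowMap_tprod, ← LinearMap.comp_apply, hf g,
      LinearMap.comp_apply, h0, map_zero]
  have hsum := (f.compMultilinearMap (tprod K)).map_eq_sum_neg_one_pow_smul_map_piecewise_add
    (c • w) (b ∘ e)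
  simp only [LinearMap.compMultilinearMap_apply, hvanish, smul_zero, Finset.sum_const_zero] at hsum
  rw [show c • w = fun k => c • w k from rfl, MultilinearMap.map_smul_univ, map_smul,
    Finset.prod_const, smul_eq_zero] at hsum
  simpa using hsum.resolve_left (pow_ne_zero _ hc0)

section Diagonal

variable {κ : Type*} (b : Module.Basis κ K V)

noncomputable def Module.Basis.diagEquiv (t : κ → Kˣ) : V ≃ₗ[K] V :=
  b.equiv (b.unitsSMul t) (Equiv.refl κ)

theorem Module.Basis.diagEquiv_apply_self (t : κ → Kˣ) (i : κ) :
    b.diagEquiv t (b i) = (t i : K) • b i := by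
  simp [diagEquiv, equiv_apply, unitsSMul_apply, Units.smul_def]

local notation "𝔅" => Basis.piTensorProduct fun _ : Fin n => b

theorem tpowMap_diagEquiv_piTensorProduct (t : κ → Kˣ) (J : Fin n → κ) :
    tpowMap K V n (b.diagEquiv t) (𝔅 J) = (∏ k, (t (J k) : K)) • 𝔅 J := by
  simp only [Basis.piTensorProduct_apply, tpowMap, map_tprod, LinearEquiv.coe_coe,
    Module.Basis.diagEquiv_apply_self]
  exact MultilinearMap.map_smul_univ _ _ _

theorem repr_tpowMap_diagEquiv (t : κ → Kˣ) (x : ⨂[K] _ : Fin n, V) (J : Fin n → κ) :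
    (𝔅).repr (tpowMap K V n (b.diagEquiv t) x) J = (∏ k, (t (J k) : K)) * (𝔅).repr x J := by
  classical
  have : Finsupp.lapply J ∘ₗ (𝔅).repr.toLinearMap ∘ₗ tpowMap K V n (b.diagEquiv t)
      = (∏ k, (t (J k) : K)) • (Finsupp.lapply J ∘ₗ (𝔅).repr.toLinearMap) := by
    refine (𝔅).ext fun J' => ?_
    rw [LinearMap.comp_apply, LinearMap.comp_apply, tpowMap_diagEquiv_piTensorProduct, map_smul,
      LinearMap.smul_apply]
    simp only [LinearMap.comp_apply, LinearEquiv.coe_coe, Module.Basis.repr_self,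
      Finsupp.lapply_apply, Finsupp.smul_apply, Finsupp.single_apply, smul_eq_mul]
    split_ifs with h
    · rw [h]
    · simp
  exact LinearMap.congr_fun this x

theorem apply_piTensorProduct_mem_span_perm [CharZero K] {f : Module.End K (⨂[K] _ : Fin n, V)}
    (hf : f ∈ glCommutant K V n) (J₀ : Fin n → κ) :
    f (𝔅 J₀) ∈ Submodule.span K (Set.range fun σ : Equiv.Perm (Fin n) => 𝔅 (J₀ ∘ σ)) := by
  classical
  rw [Set.range_comp' 𝔅, Module.Basis.mem_span_image]
  intro J hJ
  suffices ∀ t : κ → Kˣ, ∏ k, (t (J k) : K) = ∏ k, (t (J₀ k) : K) from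
    (exists_perm_eq_comp_of_forall_prod_eq this).imp fun σ h => h.symm
  intro t
  refine mul_right_cancel₀ (Finsupp.mem_support_iff.mp hJ) ?_
  have := congr((𝔅).repr $(LinearMap.congr_fun (hf (b.diagEquiv t)) (𝔅 J₀)) J)
  rw [LinearMap.comp_apply, LinearMap.comp_apply, tpowMap_diagEquiv_piTensorProduct, map_smul,
    repr_tpowMap_diagEquiv, map_smul, Finsupp.smul_apply, smul_eq_mul] at this
  exact this.symm

end Diagonal

end TensorPower

/-- if `dim_K V ≥ n`, the space of endomorphisms of `V^{⊗n}` commuting with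
all `g^{⊗n}`, `g ∈ GL(V)`, has dimension `n!`. -/
theorem stmt18 (K : Type*) [Field K] [CharZero K] (V : Type*) [AddCommGroup V] [Module K V]
    [FiniteDimensional K V] (n : ℕ) (hn : n ≤ Module.finrank K V) :
    Module.finrank K ↥(glCommutant K V n) = n.factorial := by
  let b := Module.finBasis K V
  let B := Basis.piTensorProduct fun _ : Fin n => b
  have he : Injective (Fin.castLE hn) := Fin.castLE_injective hn
  let Φ := LinearMap.applyₗ (B (Fin.castLE hn)) ∘ₗ (glCommutant K V n).subtype
  have hΦ : Injective Φ := by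
    intro f g hfg
    refine sub_eq_zero.mp (Subtype.ext ?_)
    exact eq_zero_of_mem_glCommutant_of_apply_tprod_eq_zero b he (f - g).2
      (by simpa [Φ, B, sub_eq_zero, Function.comp_def] using hfg)
  have hrange : LinearMap.range Φ =
      Submodule.span K (Set.range fun σ : Equiv.Perm (Fin n) => B (Fin.castLE hn ∘ σ)) := by
    refine le_antisymm ?_ (Submodule.span_le.mpr ?_)
    · rintro _ ⟨f, rfl⟩
      exact apply_piTensorProduct_mem_span_perm b f.2 _
    · rintro _ ⟨σ, rfl⟩
      refine ⟨⟨_, permMap_mem_glCommutant σ⁻¹⟩, ?_⟩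
      simp [Φ, B, permMap_tprod, Equiv.Perm.inv_def, Function.comp_def]
  have hli : LinearIndependent K fun σ : Equiv.Perm (Fin n) => B (Fin.castLE hn ∘ σ) :=
    B.linearIndependent.comp _ (he.comp_left.comp DFunLike.coe_injective)
  rw [← LinearMap.finrank_range_of_inj hΦ, hrange, finrank_span_eq_card hli, Fintype.card_perm,
    Fintype.card_fin]
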